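/- arXiv:2005.06758 — 5 statements merged into one kernel-verified Lean document; each statement's English description precedes it below -/
import Mathlib

section
/- Let f(c) = u_S(c) − c·M where u_S(c) = (b_S c − c²)^γ with 0 < γ < 1, b_S > 0, and M > 0. Then every maximizer c* of f on [0, b_S/2] satisfies 0 < c* < b_S/2. -/
open Real

set_option maxHeartbeats 1600000 in
/-- For `f(c) = (b_S c - c²)^γ - c M` with `0 < γ < 1`, `b_S > 0`, `M > 0`, every
maximizer of `f` on `[0, b_S/2]` lies strictly inside `(0, b_S/2)`. -/
theorem susceptible_best_response_interior (bS γ M : ℝ)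
    (hbS : 0 < bS) (hγ0 : 0 < γ) (hγ1 : γ < 1) (hM : 0 < M)
    (f : ℝ → ℝ) (hf : ∀ c, f c = (bS * c - c ^ 2) ^ γ - c * M)
    (cstar : ℝ) (hmem : cstar ∈ Set.Icc (0 : ℝ) (bS / 2))
    (hmax : IsMaxOn f (Set.Icc (0 : ℝ) (bS / 2)) cstar) :
    0 < cstar ∧ cstar < bS / 2 := by
  set A := bS / 2 with hA
  have hA0 : 0 < A := by positivity
  have hAγ : 0 < A ^ γ := rpow_pos_of_pos hA0 γ
  constructor
  · -- rule out cstar = 0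
    rcases lt_or_eq_of_le hmem.1 with h | h
    · exact h
    exfalso
    -- f 0 = 0
    have hf0 : f 0 = 0 := by
      rw [hf]; simp [Real.zero_rpow hγ0.ne']
    set d : ℝ := (A ^ γ / (2 * M)) ^ (1 / (1 - γ)) with hd
    have hd0 : 0 < d := rpow_pos_of_pos (by positivity) _
    set c : ℝ := min A d with hc
    have hc0 : 0 < c := lt_min hA0 hd0
    have hcA : c ≤ A := min_le_left _ _
    have hcmem : c ∈ Set.Icc (0 : ℝ) A := ⟨hc0.le, hcA⟩
    -- c^(1-γ) ≤ A^γ/(2M)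
    have h1γ : (0:ℝ) < 1 - γ := by linarith
    have hcd : c ^ (1 - γ) ≤ A ^ γ / (2 * M) := by
      have : c ^ (1 - γ) ≤ d ^ (1 - γ) :=
        rpow_le_rpow hc0.le (min_le_right _ _) h1γ.le
      calc c ^ (1 - γ) ≤ d ^ (1 - γ) := this
        _ = A ^ γ / (2 * M) := by
            rw [hd, ← Real.rpow_mul (by positivity), one_div,
              inv_mul_cancel₀ h1γ.ne', Real.rpow_one]
    -- f c > 0
    have key : bS * c - c ^ 2 ≥ c * A := by
      have : bS - c ≥ A := by rw [hA] at hcA ⊢; linarith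
      nlinarith
    have h2 : (bS * c - c ^ 2) ^ γ ≥ (c * A) ^ γ :=
      rpow_le_rpow (by positivity) key hγ0.le
    have h3 : (c * A) ^ γ = c ^ γ * A ^ γ := mul_rpow hc0.le hA0.le
    have h4 : c = c ^ γ * c ^ (1 - γ) := by
      rw [← Real.rpow_add hc0]; norm_num
    have h5 : c ^ γ * c ^ (1 - γ) * M < c ^ γ * A ^ γ := by
      have hcγ : 0 < c ^ γ := rpow_pos_of_pos hc0 γ
      have : c ^ (1 - γ) * M ≤ A ^ γ / 2 := by
        rw [le_div_iff₀ (by positivity)] at hcd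
        nlinarith
      nlinarith
    have hfc : 0 < f c := by
      rw [hf]
      have : c * M < (c * A) ^ γ := by rw [h3]; nlinarith
      linarith [h2]
    have := hmax hcmem
    rw [h] at hf0
    simp only [Set.mem_setOf_eq, hf0] at this
    linarith
  · -- rule out cstar = A
    rcases lt_or_eq_of_le hmem.2 with h | h
    · exact h
    exfalso
    clear_value A
    set K : ℝ := γ * ((3 / 4) * A ^ 2) ^ (γ - 1) with hK
    have hA2 : (0:ℝ) < (3 / 4) * A ^ 2 := by nlinarith
    have hK0 : 0 < K := by
      have := rpow_pos_of_pos hA2 (γ - 1)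
      rw [hK]; positivity
    clear_value K
    set ε : ℝ := min (A / 2) (M / (2 * K)) with hε
    have hε0 : 0 < ε := lt_min (by linarith) (div_pos hM (by linarith))
    have hεA : ε ≤ A / 2 := min_le_left _ _
    have hεK : ε ≤ M / (2 * K) := min_le_right _ _
    clear_value ε
    set c : ℝ := A - ε with hc
    have hcmem : c ∈ Set.Icc (0 : ℝ) A := ⟨by linarith, by linarith⟩
    have hbSA : bS = 2 * A := by rw [hA]; ring
    have hvc : bS * c - c ^ 2 = A ^ 2 - ε ^ 2 := by rw [hbSA, hc]; ring
    have hvA : bS * A - A ^ 2 = A ^ 2 := by rw [hbSA]; ring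
    set y : ℝ := A ^ 2 - ε ^ 2 with hy
    clear_value y
    have hy0 : 0 < y := by nlinarith
    have hy34 : (3 / 4) * A ^ 2 ≤ y := by nlinarith
    -- Bernoulli bound : (A^2)^γ ≤ y^γ + K * ε^2
    have hsplit : (A ^ 2 : ℝ) = y * (1 + ε ^ 2 / y) := by
      field_simp
      linarith
    have hbern : ((A ^ 2 : ℝ)) ^ γ ≤ y ^ γ * (1 + γ * (ε ^ 2 / y)) := by
      rw [hsplit, mul_rpow hy0.le (by positivity)]
      have hs0 : (0:ℝ) ≤ ε ^ 2 / y := by positivity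
      have hs01 : (-1:ℝ) ≤ ε ^ 2 / y := by linarith
      have hb := rpow_one_add_le_one_add_mul_self hs01 hγ0.le hγ1.le
      have : (0:ℝ) ≤ y ^ γ := (rpow_pos_of_pos hy0 γ).le
      nlinarith
    have hyK : y ^ γ * (γ * (ε ^ 2 / y)) ≤ K * ε ^ 2 := by
      have h6 : y ^ γ / y = y ^ (γ - 1) := by
        rw [Real.rpow_sub hy0, Real.rpow_one]
      have h7 : y ^ (γ - 1) ≤ ((3 / 4) * A ^ 2) ^ (γ - 1) :=
        Real.rpow_le_rpow_of_nonpos hA2 hy34 (by linarith : γ - 1 ≤ 0)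
      have : y ^ γ * (γ * (ε ^ 2 / y)) = γ * (y ^ γ / y) * ε ^ 2 := by
        rw [div_eq_mul_inv, div_eq_mul_inv]; ring
      rw [this, h6, hK]
      exact mul_le_mul_of_nonneg_right (mul_le_mul_of_nonneg_left h7 hγ0.le) (sq_nonneg ε)
    have hloss : ((A ^ 2 : ℝ)) ^ γ - y ^ γ ≤ K * ε ^ 2 := by nlinarith
    have hKε : K * ε ^ 2 < ε * M := by
      have : K * ε ≤ M / 2 := by
        rw [le_div_iff₀ (by linarith)] at hεK
        linarith
      nlinarith
    -- contradiction
    have hgt : f c > f A := by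
      rw [hf, hf, hvc, hvA]
      have hcM : c * M = A * M - ε * M := by rw [hc]; ring
      linarith
    have := hmax hcmem
    rw [h] at this
    simp only [Set.mem_setOf_eq] at this
    linarith
end

section
/- Let f(c_S, c_I) = x_S u_S(c_S) + x_I u_I(c_I) − c_S c_I β x_S x_I Λ, with x_S, x_I, β, Λ > 0 and u_S, u_I of the form u_z(c) = (b_z c − c²)^γ, 0 < γ < 1. Then any maximizer (c_S*, c_I*) over [0, b_S/2] × [0, b_I/2] satisfies c_S* > 0 and c_I* < b_I/2. -/
set_option maxHeartbeats 1000000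


/-- For `f(c_S, c_I) = x_S u_S(c_S) + x_I u_I(c_I) - c_S c_I β x_S x_I Λ` with
`x_S, x_I, β, Λ > 0` and `u_z(c) = (b_z c - c²)^γ`, `0 < γ < 1`, any maximizer
`(c_S*, c_I*)` over `[0, b_S/2] × [0, b_I/2]` satisfies `c_S* > 0` and `c_I* < b_I/2`. -/
theorem social_hamiltonian_maximizer (xS xI β Λ bS bI γ : ℝ)
    (hxS : 0 < xS) (hxI : 0 < xI) (hβ : 0 < β) (hΛ : 0 < Λ)
    (hbS : 0 < bS) (hbI : 0 < bI) (hγ0 : 0 < γ) (hγ1 : γ < 1)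
    (f : ℝ × ℝ → ℝ)
    (hf : ∀ p : ℝ × ℝ, f p = xS * (bS * p.1 - p.1 ^ 2) ^ γ + xI * (bI * p.2 - p.2 ^ 2) ^ γ
      - p.1 * p.2 * β * xS * xI * Λ)
    (cstar : ℝ × ℝ)
    (hmem : cstar ∈ Set.Icc (0 : ℝ) (bS / 2) ×ˢ Set.Icc (0 : ℝ) (bI / 2))
    (hmax : IsMaxOn f (Set.Icc (0 : ℝ) (bS / 2) ×ˢ Set.Icc (0 : ℝ) (bI / 2)) cstar) :
    0 < cstar.1 ∧ cstar.2 < bI / 2 := by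
  obtain ⟨⟨hc10, hc11⟩, hc20, hc21⟩ := hmem
  have h1γ : (0:ℝ) < 1 - γ := by linarith
  have part1 : 0 < cstar.1 := by
    by_contra h
    have hc1 : cstar.1 = 0 := le_antisymm (not_lt.mp h) hc10
    set K0 : ℝ := bI / 2 * (β * xS * xI * Λ) with hK0def
    have hK0 : 0 < K0 := by positivity
    have hbSγ : 0 < xS * (bS / 2) ^ γ := by positivity
    set M : ℝ := xS * (bS / 2) ^ γ / K0 with hMdef
    have hM : 0 < M := by positivity
    set ε : ℝ := min (bS / 2) ((M / 2) ^ (1 / (1 - γ))) with hεdef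
    have hε : 0 < ε := lt_min (by positivity) (Real.rpow_pos_of_pos (by positivity) _)
    have hεbS : ε ≤ bS / 2 := min_le_left _ _
    have hmemp : ((ε, cstar.2) : ℝ × ℝ) ∈
        Set.Icc (0 : ℝ) (bS / 2) ×ˢ Set.Icc (0 : ℝ) (bI / 2) :=
      ⟨⟨hε.le, hεbS⟩, hc20, hc21⟩
    have hle := hmax hmemp
    simp only [Set.mem_setOf_eq, hf, hc1] at hle
    have hz : ((bS * 0 - 0 ^ 2 : ℝ)) ^ γ = 0 := by
      norm_num
      exact Real.zero_rpow (by linarith)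
    rw [hz] at hle
    -- key inequalities
    have h1 : bS / 2 * ε ≤ bS * ε - ε ^ 2 := by nlinarith
    have h2 : (bS / 2 * ε) ^ γ ≤ (bS * ε - ε ^ 2) ^ γ :=
      Real.rpow_le_rpow (by positivity) h1 hγ0.le
    have h3 : (bS / 2 * ε) ^ γ = (bS / 2) ^ γ * ε ^ γ :=
      Real.mul_rpow (by positivity) hε.le
    have h4 : ε ^ (1 - γ) ≤ M / 2 := by
      have h := Real.rpow_le_rpow hε.le (min_le_right (bS / 2) ((M / 2) ^ (1 / (1 - γ)))) h1γ.le
      rwa [← Real.rpow_mul (by positivity), one_div_mul_cancel h1γ.ne', Real.rpow_one] at h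
    have h5 : ε ^ γ * ε ^ (1 - γ) = ε := by
      rw [← Real.rpow_add hε]
      norm_num
    have hKM : K0 * M = xS * (bS / 2) ^ γ := by
      rw [hMdef, mul_div_cancel₀ _ hK0.ne']
    have hεγpos : 0 < ε ^ γ := Real.rpow_pos_of_pos hε _
    have hε1γpos : 0 < ε ^ (1 - γ) := Real.rpow_pos_of_pos hε _
    have c1 := mul_le_mul_of_nonneg_left h4
      (le_of_lt (by positivity : (0:ℝ) < 2 * K0 * ε ^ γ))
    have e5 : 2 * K0 * ε ^ γ * ε ^ (1 - γ) = 2 * K0 * ε := by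
      rw [mul_assoc, h5]
    have e6 : 2 * K0 * ε ^ γ * (M / 2) = xS * (bS / 2) ^ γ * ε ^ γ := by
      rw [← hKM]; ring
    have key : 2 * K0 * ε ≤ xS * (bS / 2) ^ γ * ε ^ γ := by linarith
    have c2 := mul_le_mul_of_nonneg_right hc21
      (le_of_lt (by positivity : (0:ℝ) < ε * (β * xS * xI * Λ)))
    have e7 : bI / 2 * (ε * (β * xS * xI * Λ)) = K0 * ε := by rw [hK0def]; ring
    have e8 : cstar.2 * (ε * (β * xS * xI * Λ)) = ε * cstar.2 * β * xS * xI * Λ := by ring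
    have hcK : ε * cstar.2 * β * xS * xI * Λ ≤ K0 * ε := by linarith
    have A : xS * ((bS / 2) ^ γ * ε ^ γ) = xS * (bS / 2 * ε) ^ γ := by rw [h3]
    have A' : xS * ((bS / 2) ^ γ * ε ^ γ) = xS * (bS / 2) ^ γ * ε ^ γ := by ring
    have B := mul_le_mul_of_nonneg_left h2 hxS.le
    have hKε : 0 < K0 * ε := by positivity
    linarith
  refine ⟨part1, ?_⟩
  by_contra h
  have hc2 : cstar.2 = bI / 2 := le_antisymm hc21 (not_lt.mp h)
  set a : ℝ := bI ^ 2 / 4 with hadef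
  have ha : 0 < a := by positivity
  set δ : ℝ := cstar.1 * (β * xS * xI * Λ) with hδdef
  have hδ : 0 < δ := by positivity
  have haγ : 0 < a ^ (γ - 1) := Real.rpow_pos_of_pos ha _
  set ε : ℝ := min (Real.sqrt (a / 2)) (min (bI / 2) (δ / (2 * xI * a ^ (γ - 1)))) with hεdef
  have hε : 0 < ε :=
    lt_min (Real.sqrt_pos.mpr (by positivity)) (lt_min (by positivity) (by positivity))
  have hεbI : ε ≤ bI / 2 := le_trans (min_le_right _ _) (min_le_left _ _)
  have hε2a : ε ^ 2 ≤ a / 2 := by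
    have h1 : ε ≤ Real.sqrt (a / 2) := min_le_left _ _
    nlinarith [Real.sq_sqrt (show (0:ℝ) ≤ a / 2 by positivity), Real.sqrt_nonneg (a / 2)]
  have hεδ : ε ≤ δ / (2 * xI * a ^ (γ - 1)) := le_trans (min_le_right _ _) (min_le_right _ _)
  have hmemq : ((cstar.1, bI / 2 - ε) : ℝ × ℝ) ∈
      Set.Icc (0 : ℝ) (bS / 2) ×ˢ Set.Icc (0 : ℝ) (bI / 2) :=
    ⟨⟨hc10, hc11⟩, by constructor <;> linarith⟩
  have hle := hmax hmemq
  simp only [Set.mem_setOf_eq, hf, hc2] at hle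
  have e1 : bI * (bI / 2 - ε) - (bI / 2 - ε) ^ 2 = a - ε ^ 2 := by rw [hadef]; ring
  have e2 : bI * (bI / 2) - (bI / 2) ^ 2 = a := by rw [hadef]; ring
  rw [e1, e2] at hle
  have hx : 0 < 1 - ε ^ 2 / a := by
    have : ε ^ 2 / a ≤ 1 / 2 := by
      rw [div_le_iff₀ ha]; linarith
    linarith
  have hx1 : 1 - ε ^ 2 / a ≤ 1 := by
    have : 0 ≤ ε ^ 2 / a := by positivity
    linarith
  have hb1 : (1 - ε ^ 2 / a) ^ (1:ℝ) ≤ (1 - ε ^ 2 / a) ^ γ :=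
    Real.rpow_le_rpow_of_exponent_ge hx hx1 hγ1.le
  rw [Real.rpow_one] at hb1
  have e3 : a - ε ^ 2 = a * (1 - ε ^ 2 / a) := by field_simp
  have hb2 : (a - ε ^ 2) ^ γ = a ^ γ * (1 - ε ^ 2 / a) ^ γ := by
    rw [e3, Real.mul_rpow ha.le hx.le]
  have e4 : a ^ γ * (1 - ε ^ 2 / a) = a ^ γ - a ^ (γ - 1) * ε ^ 2 := by
    have hpow : a ^ (γ - 1) = a ^ γ / a := by
      rw [Real.rpow_sub ha, Real.rpow_one]
    rw [hpow]
    field_simp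
  have haγpos : 0 < a ^ γ := Real.rpow_pos_of_pos ha _
  have hb3 : a ^ γ - a ^ (γ - 1) * ε ^ 2 ≤ (a - ε ^ 2) ^ γ := by
    rw [hb2, ← e4]
    nlinarith
  -- from hεδ : ε * (2 * xI * a^(γ-1)) ≤ δ
  have hεδ' : ε * (2 * xI * a ^ (γ - 1)) ≤ δ := by
    rw [← le_div_iff₀ (by positivity)]
    exact hεδ
  have hcoup : cstar.1 * (bI / 2 - ε) * β * xS * xI * Λ
      = cstar.1 * (bI / 2) * β * xS * xI * Λ - δ * ε := by
    rw [hδdef]; ring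
  have B2 : ε * (2 * xI * a ^ (γ - 1)) * (ε / 2) = xI * (a ^ (γ - 1) * ε ^ 2) := by ring
  have C2 := mul_le_mul_of_nonneg_right hεδ' (le_of_lt (half_pos hε))
  have D2 : δ * (ε / 2) = δ * ε / 2 := by ring
  have E2 : 0 < δ * ε := by positivity
  have F2 := mul_le_mul_of_nonneg_left hb3 hxI.le
  have G2 : xI * (a ^ γ - a ^ (γ - 1) * ε ^ 2) = xI * a ^ γ - xI * (a ^ (γ - 1) * ε ^ 2) := by
    ring
  linarith
end

section
/- In the case γ = 1, for the Hamiltonian H(c_S, c_I) = x_S(b_S c_S − c_S²) + x_I(b_I c_I − c_I²) − c_S c_I β x_S x_I Λ with Λ > 0, x_S, x_I > 0: if the maximizer on [0, b_S/2] × [0, b_I/2] has c_I* = b_I/2, then necessarily c_S* = 0 and b_S ≤ (b_I/2) β x_I Λ. -/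
/-- For `γ = 1`, with `H(c_S, c_I) = x_S(b_S c_S - c_S²) + x_I(b_I c_I - c_I²)
- c_S c_I β x_S x_I Λ`, `Λ, x_S, x_I > 0`: if the maximizer on
`[0, b_S/2] × [0, b_I/2]` has `c_I* = b_I/2`, then `c_S* = 0` and
`b_S ≤ (b_I/2) β x_I Λ`. -/
theorem quadratic_corner_maximizer (xS xI β Λ bS bI : ℝ)
    (hxS : 0 < xS) (hxI : 0 < xI) (hβ : 0 < β) (hΛ : 0 < Λ)
    (hbS : 0 < bS) (hbI : 0 < bI)
    (H : ℝ × ℝ → ℝ)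
    (hH : ∀ p : ℝ × ℝ, H p = xS * (bS * p.1 - p.1 ^ 2) + xI * (bI * p.2 - p.2 ^ 2)
      - p.1 * p.2 * β * xS * xI * Λ)
    (cstar : ℝ × ℝ)
    (hmem : cstar ∈ Set.Icc (0 : ℝ) (bS / 2) ×ˢ Set.Icc (0 : ℝ) (bI / 2))
    (hmax : IsMaxOn H (Set.Icc (0 : ℝ) (bS / 2) ×ˢ Set.Icc (0 : ℝ) (bI / 2)) cstar)
    (hcorner : cstar.2 = bI / 2) :
    cstar.1 = 0 ∧ bS ≤ (bI / 2) * β * xI * Λ := by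
  obtain ⟨⟨h10, h1u⟩, _⟩ := hmem
  have hc1 : cstar.1 = 0 := by
    by_contra h
    have hc1pos : 0 < cstar.1 := lt_of_le_of_ne h10 (Ne.symm h)
    set M : ℝ := β * xS * xI * Λ with hM
    have hMpos : 0 < M := by positivity
    set ε : ℝ := min (bI / 2) (cstar.1 * M / (2 * xI)) with hε
    have hεpos : 0 < ε := lt_min (by linarith) (by positivity)
    have hε1 : ε ≤ bI / 2 := min_le_left _ _
    have hε2 : ε ≤ cstar.1 * M / (2 * xI) := min_le_right _ _
    have hmemp : ((cstar.1, bI / 2 - ε) : ℝ × ℝ) ∈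
        Set.Icc (0 : ℝ) (bS / 2) ×ˢ Set.Icc (0 : ℝ) (bI / 2) := by
      constructor
      · exact ⟨h10, h1u⟩
      · constructor <;> simp <;> linarith
    have hle := hmax hmemp
    simp only [Set.mem_setOf_eq] at hle
    rw [hH, hH, hcorner] at hle
    simp only at hle
    have hεM : ε * (2 * xI) ≤ cstar.1 * (β * xS * xI * Λ) := by
      have := (le_div_iff₀ (by positivity : (0:ℝ) < 2 * xI)).mp hε2
      rw [hM] at this
      linarith
    nlinarith [hle, mul_le_mul_of_nonneg_right hεM hεpos.le,
      mul_pos hxI (mul_pos hεpos hεpos)]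
  refine ⟨hc1, ?_⟩
  by_contra h
  push_neg at h
  set K : ℝ := bI / 2 * β * xI * Λ with hK
  have hKpos : 0 < K := by positivity
  set t : ℝ := min (bS / 2) ((bS - K) / 2) with ht
  have htpos : 0 < t := lt_min (by linarith) (by linarith)
  have ht1 : t ≤ bS / 2 := min_le_left _ _
  have ht2 : t ≤ (bS - K) / 2 := min_le_right _ _
  have hmemp : ((t, bI / 2) : ℝ × ℝ) ∈
      Set.Icc (0 : ℝ) (bS / 2) ×ˢ Set.Icc (0 : ℝ) (bI / 2) := by
    exact ⟨⟨le_of_lt htpos, ht1⟩, ⟨by linarith, le_rfl⟩⟩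
  have hle := hmax hmemp
  simp only [Set.mem_setOf_eq] at hle
  rw [hH, hH, hcorner, hc1] at hle
  simp only at hle
  nlinarith [mul_pos htpos htpos, mul_pos hxS htpos]
end

section
/- Let x_I and λ_S − λ_I evolve on an interval by ẋ_I = −μ x_I, (d/dt)(λ_S − λ_I) = −μ(λ_R − λ_I) − u_I^max with λ_R ≥ λ_S. Then the product P(t) = x_I(t)·(λ_S(t) − λ_I(t)) satisfies Ṗ(t) ≥ x_I(t)·u_I^max > 0 whenever x_I(t) > 0 and u_I^max > 0; in particular P is strictly increasing. -/
/-- At the hypothesized corner solution the product `P(t) = x_I(t)(λ_S(t) - λ_I(t))`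
satisfies `Ṗ(t) ≥ x_I(t) u_I^max > 0` whenever `x_I(t) > 0` and `u_I^max > 0`;
in particular `P` is strictly increasing when `x_I > 0` everywhere. -/
theorem corner_product_increasing (μ uImax : ℝ) (hμ : 0 ≤ μ)
    (xI lamS lamI lamR : ℝ → ℝ)
    (hxI : ∀ t, HasDerivAt xI (-(μ * xI t)) t)
    (hgap : ∀ t, HasDerivAt (fun s => lamS s - lamI s) (μ * (lamR t - lamI t) + uImax) t)
    (hRS : ∀ t, lamS t ≤ lamR t) :
    (∀ t, 0 < xI t → 0 < uImax →
      xI t * uImax ≤ deriv (fun s => xI s * (lamS s - lamI s)) t ∧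
      0 < xI t * uImax) ∧
    ((∀ t, 0 < xI t) → 0 < uImax →
      StrictMono (fun s => xI s * (lamS s - lamI s))) := by
  have hP : ∀ t, HasDerivAt (fun s => xI s * (lamS s - lamI s))
      (-(μ * xI t) * (lamS t - lamI t) + xI t * (μ * (lamR t - lamI t) + uImax)) t :=
    fun t => (hxI t).mul (hgap t)
  have key : ∀ t, 0 < xI t →
      xI t * uImax ≤ deriv (fun s => xI s * (lamS s - lamI s)) t := by
    intro t ht
    rw [(hP t).deriv]
    have h1 : 0 ≤ μ * xI t * (lamR t - lamS t) :=
      mul_nonneg (mul_nonneg hμ ht.le) (sub_nonneg.mpr (hRS t))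
    nlinarith [h1]
  refine ⟨fun t ht hu => ⟨key t ht, mul_pos ht hu⟩, fun hx hu => ?_⟩
  apply strictMono_of_deriv_pos
  intro t
  exact lt_of_lt_of_le (mul_pos (hx t) hu) (key t (hx t))
end

section
/- Consider g(c_S) = γ(b_S − 2c_S)(b_S c_S − c_S²)^{γ−1} = K for constants K ≥ 0, b_S > 0, γ ∈ (0,1). The unique solution c_S*(K) ∈ (0, b_S/2] is a strictly decreasing function of K on [0, ∞), with c_S*(0) = b_S/2 and c_S*(K) → 0 as K → ∞. -/
open Filter Topology

/-- For `g(c) = γ (b_S - 2c)(b_S c - c²)^{γ-1}`, `b_S > 0`, `γ ∈ (0,1)`: for each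
`K ≥ 0` the equation `g(c) = K` has a unique solution `c*(K) ∈ (0, b_S/2]`; the map
`K ↦ c*(K)` is strictly decreasing on `[0, ∞)`, with `c*(0) = b_S/2` and
`c*(K) → 0` as `K → ∞`. -/
theorem susceptible_best_response_comparative_statics (bS γ : ℝ)
    (hbS : 0 < bS) (hγ0 : 0 < γ) (hγ1 : γ < 1)
    (g : ℝ → ℝ) (hg : ∀ c, g c = γ * (bS - 2 * c) * (bS * c - c ^ 2) ^ (γ - 1)) :
    (∀ K : ℝ, 0 ≤ K → ∃! c : ℝ, c ∈ Set.Ioc 0 (bS / 2) ∧ g c = K) ∧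
    ∀ φ : ℝ → ℝ, (∀ K : ℝ, 0 ≤ K → φ K ∈ Set.Ioc 0 (bS / 2) ∧ g (φ K) = K) →
      StrictAntiOn φ (Set.Ici 0) ∧ φ 0 = bS / 2 ∧ Tendsto φ atTop (𝓝 0) := by
  have hγ1' : γ - 1 < 0 := by linarith
  -- positivity of the base on (0, bS/2]
  have hbase : ∀ c ∈ Set.Ioc 0 (bS / 2), 0 < bS * c - c ^ 2 := by
    rintro c ⟨hc0, hc2⟩
    have : bS * c - c ^ 2 = c * (bS - c) := by ring
    rw [this]
    exact mul_pos hc0 (by linarith)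
  -- g is strictly antitone on (0, bS/2]
  have ganti : StrictAntiOn g (Set.Ioc 0 (bS / 2)) := by
    rintro a ha b hb hab
    have hpa := hbase a ha
    have hpb := hbase b hb
    have hlt : bS * a - a ^ 2 < bS * b - b ^ 2 := by
      have : bS * b - b ^ 2 - (bS * a - a ^ 2) = (b - a) * (bS - a - b) := by ring
      nlinarith [ha.1, ha.2, hb.1, hb.2]
    have hr : (bS * b - b ^ 2) ^ (γ - 1) < (bS * a - a ^ 2) ^ (γ - 1) :=
      Real.rpow_lt_rpow_of_neg hpa hlt hγ1'
    have hrb : (0:ℝ) < (bS * b - b ^ 2) ^ (γ - 1) := Real.rpow_pos_of_pos hpb _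
    have h2a : 0 < bS - 2 * a := by rcases ha with ⟨_, ha2⟩; rcases hb with ⟨_, _⟩; linarith
    have h2b : 0 ≤ bS - 2 * b := by rcases hb with ⟨_, hb2⟩; linarith
    rw [hg a, hg b]
    have : (bS - 2 * b) * (bS * b - b ^ 2) ^ (γ - 1)
        < (bS - 2 * a) * (bS * a - a ^ 2) ^ (γ - 1) := by
      calc (bS - 2 * b) * (bS * b - b ^ 2) ^ (γ - 1)
          ≤ (bS - 2 * a) * (bS * b - b ^ 2) ^ (γ - 1) := by
            apply mul_le_mul_of_nonneg_right (by linarith) hrb.le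
        _ < (bS - 2 * a) * (bS * a - a ^ 2) ^ (γ - 1) := by
            exact mul_lt_mul_of_pos_left hr h2a
    calc γ * (bS - 2 * b) * (bS * b - b ^ 2) ^ (γ - 1)
        = γ * ((bS - 2 * b) * (bS * b - b ^ 2) ^ (γ - 1)) := by ring
      _ < γ * ((bS - 2 * a) * (bS * a - a ^ 2) ^ (γ - 1)) := mul_lt_mul_of_pos_left this hγ0
      _ = γ * (bS - 2 * a) * (bS * a - a ^ 2) ^ (γ - 1) := by ring
  have ghalf : g (bS / 2) = 0 := by rw [hg]; ring_nf
  -- for every K ≥ 0 there is a small c₁ with g c₁ ≥ K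
  have hbig : ∀ K : ℝ, 0 ≤ K → ∃ c₁ ∈ Set.Ioc (0:ℝ) (bS / 4), K ≤ g c₁ := by
    intro K hK
    set M : ℝ := max (2 * (K + 1) / (γ * bS)) 1 with hM
    have hM1 : (1:ℝ) ≤ M := le_max_right _ _
    have hM0 : (0:ℝ) < M := lt_of_lt_of_le one_pos hM1
    set t : ℝ := M ^ ((γ - 1)⁻¹) with ht
    have ht0 : 0 < t := Real.rpow_pos_of_pos hM0 _
    have htpow : t ^ (γ - 1) = M := by
      rw [ht, ← Real.rpow_mul hM0.le, inv_mul_cancel₀ (by linarith : γ - 1 ≠ 0),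
        Real.rpow_one]
    set c₁ : ℝ := min (bS / 4) (t / bS) with hc₁
    have hc₁0 : 0 < c₁ := lt_min (by linarith) (div_pos ht0 hbS)
    have hc₁4 : c₁ ≤ bS / 4 := min_le_left _ _
    refine ⟨c₁, ⟨hc₁0, hc₁4⟩, ?_⟩
    have hmem : c₁ ∈ Set.Ioc (0:ℝ) (bS / 2) := ⟨hc₁0, by linarith⟩
    have hp := hbase c₁ hmem
    have hle1 : bS * c₁ - c₁ ^ 2 ≤ t := by
      have h1 : bS * c₁ ≤ t := by
        have : c₁ ≤ t / bS := min_le_right _ _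
        calc bS * c₁ ≤ bS * (t / bS) := by
              exact mul_le_mul_of_nonneg_left this hbS.le
          _ = t := by field_simp
      nlinarith [sq_nonneg c₁]
    have hr1 : M ≤ (bS * c₁ - c₁ ^ 2) ^ (γ - 1) := by
      rw [← htpow]
      exact Real.rpow_le_rpow_of_nonpos hp hle1 hγ1'.le
    have h2 : bS / 2 ≤ bS - 2 * c₁ := by linarith
    have hrpos : (0:ℝ) < (bS * c₁ - c₁ ^ 2) ^ (γ - 1) := Real.rpow_pos_of_pos hp _
    have hKM : K + 1 ≤ γ * (bS / 2) * M := by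
      have : 2 * (K + 1) / (γ * bS) ≤ M := le_max_left _ _
      have hγbS : 0 < γ * bS := mul_pos hγ0 hbS
      rw [div_le_iff₀ hγbS] at this
      nlinarith
    rw [hg]
    calc K ≤ K + 1 := by linarith
      _ ≤ γ * (bS / 2) * M := hKM
      _ ≤ γ * (bS / 2) * (bS * c₁ - c₁ ^ 2) ^ (γ - 1) := by
          apply mul_le_mul_of_nonneg_left hr1 (by positivity)
      _ ≤ γ * (bS - 2 * c₁) * (bS * c₁ - c₁ ^ 2) ^ (γ - 1) := by
          apply mul_le_mul_of_nonneg_right _ hrpos.le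
          nlinarith
  -- existence
  have hexists : ∀ K : ℝ, 0 ≤ K → ∃ c ∈ Set.Ioc 0 (bS / 2), g c = K := by
    intro K hK
    obtain ⟨c₁, ⟨hc₁0, hc₁4⟩, hKc₁⟩ := hbig K hK
    have hc₁half : c₁ ≤ bS / 2 := by linarith
    have hcont : ContinuousOn g (Set.Icc c₁ (bS / 2)) := by
      have : ContinuousOn (fun c => γ * (bS - 2 * c) * (bS * c - c ^ 2) ^ (γ - 1))
          (Set.Icc c₁ (bS / 2)) := by
        apply ContinuousOn.mul
        · fun_prop
        · apply ContinuousOn.rpow_const (by fun_prop)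
          rintro x ⟨hx1, hx2⟩
          exact Or.inl (ne_of_gt (hbase x ⟨lt_of_lt_of_le hc₁0 hx1, hx2⟩))
      exact this.congr (fun x _ => hg x)
    have hsub : Set.Icc (g (bS / 2)) (g c₁) ⊆ g '' Set.Icc c₁ (bS / 2) :=
      intermediate_value_Icc' hc₁half hcont
    have hKmem : K ∈ Set.Icc (g (bS / 2)) (g c₁) := ⟨by rw [ghalf]; exact hK, hKc₁⟩
    obtain ⟨c, ⟨hcl, hcu⟩, hgc⟩ := hsub hKmem
    exact ⟨c, ⟨lt_of_lt_of_le hc₁0 hcl, hcu⟩, hgc⟩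
  have huniq : ∀ K : ℝ, 0 ≤ K → ∃! c : ℝ, c ∈ Set.Ioc 0 (bS / 2) ∧ g c = K := by
    intro K hK
    obtain ⟨c, hc, hgc⟩ := hexists K hK
    refine ⟨c, ⟨hc, hgc⟩, ?_⟩
    rintro c' ⟨hc', hgc'⟩
    by_contra hne
    rcases lt_or_gt_of_ne hne with h | h
    · exact absurd (hgc'.trans hgc.symm) (ne_of_gt (ganti hc' hc h))
    · exact absurd (hgc.trans hgc'.symm) (ne_of_gt (ganti hc hc' h))
  refine ⟨huniq, ?_⟩
  intro φ hφ
  -- key: K < K' → φ K' < φ K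
  have hanti : StrictAntiOn φ (Set.Ici 0) := by
    intro K hK K' hK' hlt
    have h1 := hφ K hK
    have h2 := hφ K' hK'
    by_contra hle
    push_neg at hle
    rcases eq_or_lt_of_le hle with heq | hltc
    · rw [← heq, h1.2] at h2; linarith [h2.2]
    · have := ganti h1.1 h2.1 hltc
      rw [h1.2, h2.2] at this
      linarith
  refine ⟨hanti, ?_, ?_⟩
  · -- φ 0 = bS / 2
    have h0 := hφ 0 le_rfl
    have hhalfmem : (bS / 2) ∈ Set.Ioc (0:ℝ) (bS / 2) := ⟨by linarith, le_rfl⟩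
    obtain ⟨c, _, huc⟩ := huniq 0 le_rfl
    have e1 := huc (φ 0) h0
    have e2 := huc (bS / 2) ⟨hhalfmem, ghalf⟩
    rw [e1, e2]
  · -- tendsto
    rw [Metric.tendsto_atTop]
    intro ε hε
    set c₀ : ℝ := min (ε / 2) (bS / 4) with hc₀
    have hc₀0 : 0 < c₀ := lt_min (by linarith) (by linarith)
    have hc₀mem : c₀ ∈ Set.Ioc (0:ℝ) (bS / 2) := ⟨hc₀0, by
      have := min_le_right (ε / 2) (bS / 4); linarith⟩
    refine ⟨max (g c₀ + 1) 0, fun K hK => ?_⟩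
    have hK0 : 0 ≤ K := le_trans (le_max_right _ _) hK
    have hKg : g c₀ < K := lt_of_lt_of_le (by linarith [le_max_left (g c₀ + 1) 0]) le_rfl
    have hφK := hφ K hK0
    -- φ K < c₀ since g (φ K) = K > g c₀
    have hlt : φ K < c₀ := by
      by_contra hle
      push_neg at hle
      rcases eq_or_lt_of_le hle with heq | hltc
      · rw [heq, hφK.2] at hKg; exact lt_irrefl _ hKg
      · have := ganti hc₀mem hφK.1 hltc
        rw [hφK.2] at this
        linarith
    rw [Real.dist_eq, sub_zero, abs_of_pos hφK.1.1]
    have : c₀ ≤ ε / 2 := min_le_left _ _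
    linarith
end
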